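/- arXiv:2001.06562 — 2 statements merged into one kernel-verified Lean document; each statement's English description precedes it below -/
import Mathlib

section
/- Let f : ℝⁿ → ℝⁿ be differentiable at 0 with f(0) = 0, and let A : ℝⁿ → ℝ^{n×n} be any matrix-valued function that is continuous at 0 and satisfies f(x) = A(x)x for all x ∈ ℝⁿ. Then A(0) = Df(0), the Jacobian matrix of f at 0. -/
open Matrix

theorem sdc_aux_mulVec_single (n : ℕ) (M : Matrix (Fin n) (Fin n) ℝ) (j : Fin n) :
    M *ᵥ Pi.single j 1 = fun i => M i j := by
  funext i
  simp [Matrix.mulVec_single]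

/-- **Any SDC parameterization agrees with the Jacobian at the origin.**
If `f : ℝⁿ → ℝⁿ` is differentiable at `0` with `f 0 = 0`, and `A` is a matrix-valued
function continuous at `0` with `f x = A x *ᵥ x` for all `x`, then `A 0` equals the
Jacobian matrix `Df(0)` of `f` at `0`. -/
theorem sdc_parameterization_value_at_origin
    (n : ℕ) (f : (Fin n → ℝ) → (Fin n → ℝ))
    (hf : DifferentiableAt ℝ f 0) (hf0 : f 0 = 0)
    (A : (Fin n → ℝ) → Matrix (Fin n) (Fin n) ℝ)
    (hAcont : ContinuousAt A 0)
    (hA : ∀ x, f x = (A x) *ᵥ x) :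
    A 0 = Matrix.of fun i j => (fderiv ℝ f 0) (Pi.single j 1) i := by
  ext i j
  set L := fderiv ℝ f 0 with hL
  set v : Fin n → ℝ := Pi.single j 1 with hv
  -- g t = f (t • v) has derivative L v at 0
  have hsmul : HasDerivAt (fun t : ℝ => t • v) v 0 := by
    simpa using (hasDerivAt_id (0:ℝ)).smul_const v
  have hg : HasDerivAt (fun t : ℝ => f (t • v)) (L v) 0 := by
    have hf' : HasFDerivAt f L ((0:ℝ) • v) := by
      simpa using hf.hasFDerivAt
    exact hf'.comp_hasDerivAt 0 hsmul
  -- slope tendsto L v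
  have h1 : Filter.Tendsto (fun t : ℝ => t⁻¹ • f (t • v)) (nhdsWithin 0 {0}ᶜ) (nhds (L v)) := by
    have := hasDerivAt_iff_tendsto_slope.mp hg
    refine this.congr' ?_
    filter_upwards [self_mem_nhdsWithin] with t ht
    simp [slope_def_field, slope, hf0]
  -- the same function equals t ↦ A (t • v) *ᵥ v on the punctured nbhd
  have h2 : Filter.Tendsto (fun t : ℝ => t⁻¹ • f (t • v)) (nhdsWithin 0 {0}ᶜ)
      (nhds ((A 0) *ᵥ v)) := by
    have hc : Filter.Tendsto (fun t : ℝ => (A (t • v)) *ᵥ v) (nhdsWithin 0 {0}ᶜ)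
        (nhds ((A 0) *ᵥ v)) := by
      have hcv : Filter.Tendsto (fun t : ℝ => (A (t • v)) *ᵥ v) (nhds 0) (nhds ((A 0) *ᵥ v)) := by
        have hsm : Filter.Tendsto (fun t : ℝ => t • v) (nhds 0) (nhds 0) := by
          simpa using (Continuous.tendsto (f := fun t : ℝ => t • v) (by fun_prop) 0)
        have h0 : Filter.Tendsto (fun t : ℝ => A (t • v)) (nhds 0) (nhds (A 0)) :=
          Filter.Tendsto.comp hAcont hsm
        have hmv : Continuous (fun M : Matrix (Fin n) (Fin n) ℝ => M *ᵥ v) :=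
          continuous_id.matrix_mulVec continuous_const
        exact Filter.Tendsto.comp (hmv.tendsto (A 0)) h0
      exact hcv.mono_left nhdsWithin_le_nhds
    refine hc.congr' ?_
    filter_upwards [self_mem_nhdsWithin] with t ht
    have ht' : t ≠ 0 := ht
    rw [hA, Matrix.mulVec_smul]
    simp [smul_smul, inv_mul_cancel₀ ht']
  have huniq : (A 0) *ᵥ v = L v := tendsto_nhds_unique h2 h1
  have := congrFun huniq i
  rw [hv, sdc_aux_mulVec_single] at this
  simpa using this
end

section
/- (Correction step.) Let n, p ≥ 1, let x̂_p ∈ ℝⁿ, E ∈ ℝ^{n×n}, z ∈ ℝⁿ with ‖z‖ ≤ 1, and set the true state x = x̂_p + E z and γ = ‖E‖. Let H₀ ∈ ℝ^{p×n}, K₁ ∈ ℝ^{p×n²}, and R_H ∈ ℝ^{p×n} with ‖R_H‖ ≤ r_H, and define Δ₁ = ((x − x̂_p) ⊗ Iₙ) ∈ ℝ^{n²×n}. Let v ∈ ℝᵖ and R ∈ ℝ^{p×p} be positive definite with vᵀR⁻¹v ≤ 1, and let the measurement be y = (H₀ + K₁Δ₁ + R_H)x + v. Given a gain L ∈ ℝ^{n×p},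 set the corrected estimate x̂_c = x̂_p + L(y − H₀ x̂_p). Suppose there exist a positive definite P ∈ ℝ^{n×n} and scalars τ₁,…,τ₆ ≥ 0 such that the block matrix [[−P, Π],[Πᵀ, −Θ]] is negative semidefinite, where Π = [0ₙ, (E − L H₀ E), −L, −L K₁, −L, −L K₁, −L] (column blocks of widths 1, n, p, n², p, n², p) and Θ = diag(1 − τ₁ − τ₂ − τ₅γ²·x̂_pᵀx̂_p − τ₆·r_H²·x̂_pᵀx̂_p, τ₁Iₙ − τ₃γ²·EᵀE − τ₄·r_H²·EᵀE, τ₂R⁻¹, τ₃I_{n²}, τ₄I_p, τ₅I_{n²}, τ₆I_p). Then (x − x̂_c)ᵀ P⁻¹ (x − x̂_c) ≤ 1, i.e., x belongs to the ellipsoid E(x̂_c, P). -/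
open Matrix

/-- The spectral norm (largest singular value) of a real matrix, i.e. its operator norm
with respect to Euclidean vector norms. -/
noncomputable def matSpectralNorm {m n : Type*} [Fintype m] [Fintype n] [DecidableEq n]
    (M : Matrix m n ℝ) : ℝ :=
  ‖LinearMap.toContinuousLinearMap (Matrix.toEuclideanLin M)‖

/-- The Euclidean norm of a real vector. -/
noncomputable def euclNorm {n : Type*} [Fintype n] (v : n → ℝ) : ℝ :=
  Real.sqrt (∑ i, v i ^ 2)

/-- The Kronecker product `ξ ⊗ Iₘ` of a column vector `ξ ∈ ℝⁿ` with the `m × m`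
identity matrix, as an `nm × m` matrix. -/
def kronColId {n : Type*} (m : Type*) [DecidableEq m] (ξ : n → ℝ) : Matrix (n × m) m ℝ :=
  Matrix.of fun p j => ξ p.1 * (if p.2 = j then (1:ℝ) else 0)

/-- Index type for the stacked uncertainty vector
`ζ = (1, z, v, Δ₃, Δ₄, Δ₅, Δ₆)` of the correction step: column blocks of
widths `1, n, p, n², p, n², p`. -/
abbrev CorrIdx (n p : ℕ) :=
  Unit ⊕ Fin n ⊕ Fin p ⊕ (Fin n × Fin n) ⊕ Fin p ⊕ (Fin n × Fin n) ⊕ Fin p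

set_option maxHeartbeats 1000000

lemma dot_self_eq_norm_sq {k : Type*} [Fintype k] (u : k → ℝ) :
    u ⬝ᵥ u = ‖(WithLp.equiv 2 (k → ℝ)).symm u‖ ^ 2 := by
  rw [EuclideanSpace.norm_eq, Real.sq_sqrt (by positivity)]
  simp [dotProduct, sq]

lemma spec_bound {a b : Type*} [Fintype a] [Fintype b] [DecidableEq b]
    (M : Matrix a b ℝ) (w : b → ℝ) :
    (M *ᵥ w) ⬝ᵥ (M *ᵥ w) ≤ matSpectralNorm M ^ 2 * (w ⬝ᵥ w) := by
  rw [dot_self_eq_norm_sq, dot_self_eq_norm_sq]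
  have h := (LinearMap.toContinuousLinearMap (Matrix.toEuclideanLin M)).le_opNorm
      ((WithLp.equiv 2 (b → ℝ)).symm w)
  have he : (LinearMap.toContinuousLinearMap (Matrix.toEuclideanLin M))
      ((WithLp.equiv 2 (b → ℝ)).symm w) = (WithLp.equiv 2 (a → ℝ)).symm (M *ᵥ w) := by
    simp [Matrix.toEuclideanLin_apply]
  rw [he] at h
  have h0 : (0:ℝ) ≤ ‖(WithLp.equiv 2 (a → ℝ)).symm (M *ᵥ w)‖ := norm_nonneg _
  calc ‖(WithLp.equiv 2 (a → ℝ)).symm (M *ᵥ w)‖ ^ 2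
      ≤ (matSpectralNorm M * ‖(WithLp.equiv 2 (b → ℝ)).symm w‖)^2 :=
        pow_le_pow_left₀ h0 h 2
    _ = matSpectralNorm M ^ 2 * ‖(WithLp.equiv 2 (b → ℝ)).symm w‖^2 := by ring

lemma dot_self_nonneg {k : Type*} [Fintype k] (u : k → ℝ) : 0 ≤ u ⬝ᵥ u :=
  Finset.sum_nonneg fun i _ => mul_self_nonneg _

lemma kron_mulVec {n m : Type*} [Fintype m] [DecidableEq m] (ξ : n → ℝ) (w : m → ℝ) (q : n × m) :
    (kronColId m ξ *ᵥ w) q = ξ q.1 * w q.2 := by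
  simp [kronColId, Matrix.mulVec, dotProduct, mul_ite, Finset.sum_ite_eq]

lemma kron_dot {n m : Type*} [Fintype n] [Fintype m] [DecidableEq m] (ξ : n → ℝ) (w : m → ℝ) :
    (kronColId m ξ *ᵥ w) ⬝ᵥ (kronColId m ξ *ᵥ w) = (ξ ⬝ᵥ ξ) * (w ⬝ᵥ w) := by
  simp only [dotProduct]
  rw [Finset.sum_mul_sum, ← Finset.sum_product']
  exact Finset.sum_congr rfl fun q _ => by rw [kron_mulVec]; ring

/-- **Correction step of the SDC set-membership filter (Theorem 1).**
If the LMI `[[−P, Π], [Πᵀ, −Θ]] ⪯ 0` is feasible with `P ≻ 0` and multipliers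
`τ₁, …, τ₆ ≥ 0`, then the true state `x = x̂_p + E z` lies in the correction
ellipsoid `E(x̂_c, P)`, where `x̂_c = x̂_p + L (y − H₀ x̂_p)`. -/
theorem sdc_smf_correction_step
    (n p : ℕ) (hn : 1 ≤ n) (hp : 1 ≤ p)
    (xhp : Fin n → ℝ) (E : Matrix (Fin n) (Fin n) ℝ)
    (z : Fin n → ℝ) (hz : euclNorm z ≤ 1)
    (x : Fin n → ℝ) (hx : x = xhp + E *ᵥ z)
    (H₀ : Matrix (Fin p) (Fin n) ℝ) (K₁ : Matrix (Fin p) (Fin n × Fin n) ℝ)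
    (RH : Matrix (Fin p) (Fin n) ℝ) (rH : ℝ) (hRH : matSpectralNorm RH ≤ rH)
    (Δ₁ : Matrix (Fin n × Fin n) (Fin n) ℝ) (hΔ₁ : Δ₁ = kronColId (Fin n) (x - xhp))
    (v : Fin p → ℝ) (Rm : Matrix (Fin p) (Fin p) ℝ) (hRm : Rm.PosDef)
    (hv : v ⬝ᵥ (Rm⁻¹ *ᵥ v) ≤ 1)
    (y : Fin p → ℝ) (hy : y = (H₀ + K₁ * Δ₁ + RH) *ᵥ x + v)
    (L : Matrix (Fin n) (Fin p) ℝ)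
    (xhc : Fin n → ℝ) (hxhc : xhc = xhp + L *ᵥ (y - H₀ *ᵥ xhp))
    (P : Matrix (Fin n) (Fin n) ℝ) (hP : P.PosDef)
    (τ₁ τ₂ τ₃ τ₄ τ₅ τ₆ : ℝ)
    (hτ₁ : 0 ≤ τ₁) (hτ₂ : 0 ≤ τ₂) (hτ₃ : 0 ≤ τ₃)
    (hτ₄ : 0 ≤ τ₄) (hτ₅ : 0 ≤ τ₅) (hτ₆ : 0 ≤ τ₆)
    (PiM : Matrix (Fin n) (CorrIdx n p) ℝ)
    (hPiM : PiM = Matrix.of fun i ζ =>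
      match ζ with
      | Sum.inl _ => (0:ℝ)
      | Sum.inr (Sum.inl j) => (E - L * H₀ * E) i j
      | Sum.inr (Sum.inr (Sum.inl j)) => (-L) i j
      | Sum.inr (Sum.inr (Sum.inr (Sum.inl j))) => (-(L * K₁)) i j
      | Sum.inr (Sum.inr (Sum.inr (Sum.inr (Sum.inl j)))) => (-L) i j
      | Sum.inr (Sum.inr (Sum.inr (Sum.inr (Sum.inr (Sum.inl j))))) => (-(L * K₁)) i j
      | Sum.inr (Sum.inr (Sum.inr (Sum.inr (Sum.inr (Sum.inr j))))) => (-L) i j)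
    (ThetaM : Matrix (CorrIdx n p) (CorrIdx n p) ℝ)
    (hThetaM : ThetaM = Matrix.of fun a b =>
      match a, b with
      | Sum.inl _, Sum.inl _ =>
          1 - τ₁ - τ₂ - τ₅ * matSpectralNorm E ^ 2 * (xhp ⬝ᵥ xhp)
            - τ₆ * rH ^ 2 * (xhp ⬝ᵥ xhp)
      | Sum.inr (Sum.inl i), Sum.inr (Sum.inl j) =>
          (τ₁ • (1 : Matrix (Fin n) (Fin n) ℝ)
            - (τ₃ * matSpectralNorm E ^ 2) • (Eᵀ * E)
            - (τ₄ * rH ^ 2) • (Eᵀ * E)) i j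
      | Sum.inr (Sum.inr (Sum.inl i)), Sum.inr (Sum.inr (Sum.inl j)) =>
          (τ₂ • Rm⁻¹) i j
      | Sum.inr (Sum.inr (Sum.inr (Sum.inl i))),
          Sum.inr (Sum.inr (Sum.inr (Sum.inl j))) =>
          (τ₃ • (1 : Matrix (Fin n × Fin n) (Fin n × Fin n) ℝ)) i j
      | Sum.inr (Sum.inr (Sum.inr (Sum.inr (Sum.inl i)))),
          Sum.inr (Sum.inr (Sum.inr (Sum.inr (Sum.inl j)))) =>
          (τ₄ • (1 : Matrix (Fin p) (Fin p) ℝ)) i j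
      | Sum.inr (Sum.inr (Sum.inr (Sum.inr (Sum.inr (Sum.inl i))))),
          Sum.inr (Sum.inr (Sum.inr (Sum.inr (Sum.inr (Sum.inl j))))) =>
          (τ₅ • (1 : Matrix (Fin n × Fin n) (Fin n × Fin n) ℝ)) i j
      | Sum.inr (Sum.inr (Sum.inr (Sum.inr (Sum.inr (Sum.inr i))))),
          Sum.inr (Sum.inr (Sum.inr (Sum.inr (Sum.inr (Sum.inr j))))) =>
          (τ₆ • (1 : Matrix (Fin p) (Fin p) ℝ)) i j
      | _, _ => (0:ℝ))
    (hLMI : (-(Matrix.fromBlocks (-P) PiM PiMᵀ (-ThetaM))).PosSemidef) :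
    (x - xhc) ⬝ᵥ (P⁻¹ *ᵥ (x - xhc)) ≤ 1 := by
    -- notation
  set γ := matSpectralNorm E with hγ
  set Ez : Fin n → ℝ := E *ᵥ z with hEz
  set d₃ : Fin n × Fin n → ℝ := Δ₁ *ᵥ Ez with hd₃
  set d₄ : Fin p → ℝ := RH *ᵥ Ez with hd₄
  set d₅ : Fin n × Fin n → ℝ := Δ₁ *ᵥ xhp with hd₅
  set d₆ : Fin p → ℝ := RH *ᵥ xhp with hd₆
  set ζ : CorrIdx n p → ℝ :=
    Sum.elim (fun _ => (1:ℝ)) (Sum.elim z (Sum.elim v (Sum.elim d₃ (Sum.elim d₄ (Sum.elim d₅ d₆)))))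
    with hζ
  set e : Fin n → ℝ := x - xhc with he
  -- basic scalar facts
  have hγ0 : 0 ≤ γ := norm_nonneg _
  have hrH0 : 0 ≤ rH := le_trans (norm_nonneg _) hRH
  have hz2 : z ⬝ᵥ z ≤ 1 := by
    have h0 : (0:ℝ) ≤ ∑ i, z i ^ 2 := by positivity
    have h1 : Real.sqrt (∑ i, z i ^ 2) ≤ 1 := hz
    have h2 : ∑ i, z i ^ 2 ≤ 1 := by
      nlinarith [Real.sq_sqrt h0, Real.sqrt_nonneg (∑ i, z i ^ 2)]
    calc z ⬝ᵥ z = ∑ i, z i ^ 2 := by simp [dotProduct, sq]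
      _ ≤ 1 := h2
  have hEz2 : Ez ⬝ᵥ Ez ≤ γ ^ 2 := by
    have h := spec_bound E z
    nlinarith [dot_self_nonneg z]
  have hRHw : ∀ w : Fin n → ℝ, (RH *ᵥ w) ⬝ᵥ (RH *ᵥ w) ≤ rH ^ 2 * (w ⬝ᵥ w) := by
    intro w
    have h := spec_bound RH w
    have hsn : 0 ≤ matSpectralNorm RH := norm_nonneg _
    have h2 : matSpectralNorm RH ^ 2 * (w ⬝ᵥ w) ≤ rH ^ 2 * (w ⬝ᵥ w) :=
      mul_le_mul_of_nonneg_right (pow_le_pow_left₀ hsn hRH 2) (dot_self_nonneg w)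
    linarith
  have hxm : x - xhp = Ez := by rw [hx]; abel
  have hd₃v : d₃ ⬝ᵥ d₃ = (Ez ⬝ᵥ Ez) * (Ez ⬝ᵥ Ez) := by
    rw [hd₃, hΔ₁, hxm, kron_dot]
  have hd₅v : d₅ ⬝ᵥ d₅ = (Ez ⬝ᵥ Ez) * (xhp ⬝ᵥ xhp) := by
    rw [hd₅, hΔ₁, hxm, kron_dot]
  -- Pi block mulVec
  have hPiζ : PiM *ᵥ ζ = (E - L * H₀ * E) *ᵥ z + (-L) *ᵥ v + (-(L * K₁)) *ᵥ d₃
      + (-L) *ᵥ d₄ + (-(L * K₁)) *ᵥ d₅ + (-L) *ᵥ d₆ := by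
    funext i
    simp only [hPiM, hζ, Matrix.mulVec, dotProduct, Fintype.sum_sum_type,
      Sum.elim_inl, Sum.elim_inr, Matrix.of_apply, Pi.add_apply]
    simp only [Finset.univ_unique, Finset.sum_const, Finset.card_singleton, smul_eq_mul]
    ring
  have heval : e = (E - L * H₀ * E) *ᵥ z + (-L) *ᵥ v + (-(L * K₁)) *ᵥ d₃
      + (-L) *ᵥ d₄ + (-(L * K₁)) *ᵥ d₅ + (-L) *ᵥ d₆ := by
    rw [he, hd₃, hd₄, hd₅, hd₆, hEz, hxhc, hy, hx]
    funext i
    simp only [Matrix.sub_mulVec, Matrix.add_mulVec, Matrix.neg_mulVec,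
      ← Matrix.mulVec_mulVec, Matrix.mulVec_add, Matrix.mulVec_sub,
      Pi.add_apply, Pi.sub_apply, Pi.neg_apply]
    ring
  have hePi : e = PiM *ᵥ ζ := by rw [heval, hPiζ]
  -- Theta block mulVec
  have hΘζ : ThetaM *ᵥ ζ = Sum.elim
      (fun _ => 1 - τ₁ - τ₂ - τ₅ * γ ^ 2 * (xhp ⬝ᵥ xhp) - τ₆ * rH ^ 2 * (xhp ⬝ᵥ xhp))
      (Sum.elim ((τ₁ • (1 : Matrix (Fin n) (Fin n) ℝ)
            - (τ₃ * γ ^ 2) • (Eᵀ * E) - (τ₄ * rH ^ 2) • (Eᵀ * E)) *ᵥ z)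
        (Sum.elim ((τ₂ • Rm⁻¹) *ᵥ v)
          (Sum.elim ((τ₃ • (1 : Matrix (Fin n × Fin n) (Fin n × Fin n) ℝ)) *ᵥ d₃)
            (Sum.elim ((τ₄ • (1 : Matrix (Fin p) (Fin p) ℝ)) *ᵥ d₄)
              (Sum.elim ((τ₅ • (1 : Matrix (Fin n × Fin n) (Fin n × Fin n) ℝ)) *ᵥ d₅)
                ((τ₆ • (1 : Matrix (Fin p) (Fin p) ℝ)) *ᵥ d₆)))))) := by
    funext a
    rcases a with _ | a
    · simp only [hThetaM, hζ, Matrix.mulVec, dotProduct, Fintype.sum_sum_type,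
        Sum.elim_inl, Sum.elim_inr, Matrix.of_apply]
      simp
    rcases a with i | a
    · simp only [hThetaM, hζ, Matrix.mulVec, dotProduct, Fintype.sum_sum_type,
        Sum.elim_inl, Sum.elim_inr, Matrix.of_apply]
      simp
    rcases a with i | a
    · simp only [hThetaM, hζ, Matrix.mulVec, dotProduct, Fintype.sum_sum_type,
        Sum.elim_inl, Sum.elim_inr, Matrix.of_apply]
      simp
    rcases a with i | a
    · simp only [hThetaM, hζ, Matrix.mulVec, dotProduct, Fintype.sum_sum_type,
        Sum.elim_inl, Sum.elim_inr, Matrix.of_apply]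
      simp
    rcases a with i | a
    · simp only [hThetaM, hζ, Matrix.mulVec, dotProduct, Fintype.sum_sum_type,
        Sum.elim_inl, Sum.elim_inr, Matrix.of_apply]
      simp
    rcases a with i | i
    · simp only [hThetaM, hζ, Matrix.mulVec, dotProduct, Fintype.sum_sum_type,
        Sum.elim_inl, Sum.elim_inr, Matrix.of_apply]
      simp
    · simp only [hThetaM, hζ, Matrix.mulVec, dotProduct, Fintype.sum_sum_type,
        Sum.elim_inl, Sum.elim_inr, Matrix.of_apply]
      simp
  -- quadratic form value
  have hEtE : z ⬝ᵥ ((Eᵀ * E) *ᵥ z) = Ez ⬝ᵥ Ez := by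
    rw [hEz, ← Matrix.mulVec_mulVec, Matrix.dotProduct_mulVec, Matrix.vecMul_transpose]
  have hΘq : ζ ⬝ᵥ (ThetaM *ᵥ ζ) =
      (1 - τ₁ - τ₂ - τ₅ * γ ^ 2 * (xhp ⬝ᵥ xhp) - τ₆ * rH ^ 2 * (xhp ⬝ᵥ xhp))
      + (τ₁ * (z ⬝ᵥ z) - τ₃ * γ ^ 2 * (Ez ⬝ᵥ Ez) - τ₄ * rH ^ 2 * (Ez ⬝ᵥ Ez))
      + τ₂ * (v ⬝ᵥ (Rm⁻¹ *ᵥ v)) + τ₃ * (d₃ ⬝ᵥ d₃) + τ₄ * (d₄ ⬝ᵥ d₄)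
      + τ₅ * (d₅ ⬝ᵥ d₅) + τ₆ * (d₆ ⬝ᵥ d₆) := by
    rw [hΘζ, hζ]
    rw [sumElim_dotProduct_sumElim, sumElim_dotProduct_sumElim,
      sumElim_dotProduct_sumElim, sumElim_dotProduct_sumElim,
      sumElim_dotProduct_sumElim, sumElim_dotProduct_sumElim]
    have h1 : ((fun _ => (1:ℝ)) : Unit → ℝ) ⬝ᵥ
        (fun _ => 1 - τ₁ - τ₂ - τ₅ * γ ^ 2 * (xhp ⬝ᵥ xhp) - τ₆ * rH ^ 2 * (xhp ⬝ᵥ xhp)) =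
        1 - τ₁ - τ₂ - τ₅ * γ ^ 2 * (xhp ⬝ᵥ xhp) - τ₆ * rH ^ 2 * (xhp ⬝ᵥ xhp) := by
      simp [dotProduct]
    rw [h1]
    simp only [Matrix.sub_mulVec, Matrix.smul_mulVec, Matrix.one_mulVec,
      dotProduct_sub, dotProduct_smul, smul_eq_mul, hEtE]
    ring
  -- bound the quadratic form by 1
  have hΘ1 : ζ ⬝ᵥ (ThetaM *ᵥ ζ) ≤ 1 := by
    rw [hΘq, hd₃v, hd₅v]
    have b4 := hRHw Ez
    have b6 := hRHw xhp
    have hx2 : 0 ≤ xhp ⬝ᵥ xhp := dot_self_nonneg xhp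
    have hEz0 : 0 ≤ Ez ⬝ᵥ Ez := dot_self_nonneg Ez
    nlinarith [mul_nonneg hτ₃ (mul_nonneg hEz0 (sub_nonneg.2 hEz2)),
      mul_nonneg hτ₅ (mul_nonneg hx2 (sub_nonneg.2 hEz2)),
      mul_nonneg hτ₄ (sub_nonneg.2 b4), mul_nonneg hτ₆ (sub_nonneg.2 b6),
      mul_nonneg hτ₁ (sub_nonneg.2 hz2), mul_nonneg hτ₂ (sub_nonneg.2 hv)]
  -- apply the LMI
  have hPdet : IsUnit P.det := hP.det_pos.ne'.isUnit
  set aP : Fin n → ℝ := P⁻¹ *ᵥ e with haP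
  have hq := hLMI.dotProduct_mulVec_nonneg (Sum.elim aP ζ)
  rw [star_trivial] at hq
  have hneg : -(Matrix.fromBlocks (-P) PiM PiMᵀ (-ThetaM)) =
      Matrix.fromBlocks P (-PiM) (-PiMᵀ) ThetaM := by
    rw [Matrix.fromBlocks_neg, neg_neg, neg_neg]
  rw [hneg, Matrix.fromBlocks_mulVec, sumElim_dotProduct_sumElim] at hq
  simp only [Sum.elim_comp_inl, Sum.elim_comp_inr] at hq
  have hPa : P *ᵥ aP = e := by
    rw [haP, Matrix.mulVec_mulVec, Matrix.mul_nonsing_inv P hPdet, Matrix.one_mulVec]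
  rw [Matrix.neg_mulVec, Matrix.neg_mulVec, ← hePi, dotProduct_add,
    dotProduct_add, hPa, dotProduct_neg, dotProduct_neg,
    Matrix.dotProduct_mulVec, Matrix.vecMul_transpose, ← hePi] at hq
  have hcomm : aP ⬝ᵥ e = e ⬝ᵥ aP := dotProduct_comm _ _
  have hge : e ⬝ᵥ aP ≤ ζ ⬝ᵥ (ThetaM *ᵥ ζ) := by linarith
  calc (x - xhc) ⬝ᵥ (P⁻¹ *ᵥ (x - xhc)) = e ⬝ᵥ aP := by rw [he, haP]
    _ ≤ ζ ⬝ᵥ (ThetaM *ᵥ ζ) := hge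
    _ ≤ 1 := hΘ1
end
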